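/- Let n ≥ 5 and let y ∈ H \ J̃'(n−1,2). Then J̃'(n−1,2) ∪ {y} is a two-distance set if and only if y belongs to X_1^+ ∪ X_1^- ∪ X_2^+ ∪ X_2^- ∪ X_3^+ ∪ X_3^-, or, in case 5 ≤ n ≤ 10, to X_4^+ ∪ X_4^-. Moreover, for each of these eight sets X, any two distinct vectors of X are at distance √2 or 2 from each other, so that J̃'(n−1,2) ∪ X is itself a two-distance set. -/

import Mathlib

noncomputable section

/-- The set of distances between distinct points of `S`. -/
def distSet {n : ℕ} (S : Set (EuclideanSpace ℝ (Fin n))) : Set ℝ :=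
  {d | ∃ x ∈ S, ∃ y ∈ S, x ≠ y ∧ d = dist x y}

/-- `S` is an `s`-distance set: exactly `s` distances occur between distinct points. -/
def IsSDistanceSet {n : ℕ} (s : ℕ) (S : Set (EuclideanSpace ℝ (Fin n))) : Prop :=
  (distSet S).Finite ∧ (distSet S).ncard = s

/-- The representation `J̃'(n-1,2) = {eᵢ + eⱼ : 1 ≤ i < j ≤ n-1}` of the Johnson graph
`J(n-1,2)` inside `ℝⁿ` (0-based: indices `< n-1`, i.e. all but the last coordinate). -/
def JohnsonRep' (n : ℕ) : Set (EuclideanSpace ℝ (Fin n)) :=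
  {x | ∃ i j : Fin n, (i : ℕ) < (j : ℕ) ∧ (j : ℕ) < n - 1 ∧
    x = EuclideanSpace.single i 1 + EuclideanSpace.single j 1}

/-- The hyperplane `H = {x ∈ ℝⁿ : ∑ xᵢ = 2}`. -/
def Hyp2 (n : ℕ) : Set (EuclideanSpace ℝ (Fin n)) :=
  {x | ∑ i, x i = (2 : ℝ)}

/-- `X₁^ε`: the single vector `(((2n + ε·2√n)/(n(n-1)))^{n-1}, -ε·2√n/n)`. -/
def X1set (n : ℕ) (ε : ℝ) : Set (EuclideanSpace ℝ (Fin n)) :=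
  {x | (∀ i : Fin n, (i : ℕ) < n - 1 →
      x i = (2 * n + ε * (2 * Real.sqrt n)) / ((n : ℝ) * ((n : ℝ) - 1))) ∧
    (∀ i : Fin n, (i : ℕ) = n - 1 → x i = -ε * (2 * Real.sqrt n) / n)}

/-- `X₂^ε`: the single vector `(((2n + ε·√(2n²+2n))/(n(n-1)))^{n-1}, -ε·√(2n²+2n)/n)`. -/
def X2set (n : ℕ) (ε : ℝ) : Set (EuclideanSpace ℝ (Fin n)) :=
  {x | (∀ i : Fin n, (i : ℕ) < n - 1 →
      x i = (2 * n + ε * Real.sqrt (2 * (n : ℝ) ^ 2 + 2 * n)) / ((n : ℝ) * ((n : ℝ) - 1))) ∧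
    (∀ i : Fin n, (i : ℕ) = n - 1 →
      x i = -ε * Real.sqrt (2 * (n : ℝ) ^ 2 + 2 * n) / n)}

/-- `X₃^ε`: the `n-1` vectors `((n+ε)/(n-1), ((1+ε)/(n-1))^{n-2}, -ε)^{P'}`. -/
def X3set (n : ℕ) (ε : ℝ) : Set (EuclideanSpace ℝ (Fin n)) :=
  {x | {i : Fin n | (i : ℕ) < n - 1 ∧ x i = ((n : ℝ) + ε) / ((n : ℝ) - 1)}.ncard = 1 ∧
    {i : Fin n | (i : ℕ) < n - 1 ∧ x i = (1 + ε) / ((n : ℝ) - 1)}.ncard = n - 2 ∧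
    (∀ i : Fin n, (i : ℕ) = n - 1 → x i = -ε)}

/-- `X₄^ε`: the `n-1` vectors
`(((3n + ε√(10n-n²))/(n(n-1)))^{n-2}, (-n² + 4n + ε√(10n-n²))/(n(n-1)), -ε√(10n-n²)/n)^{P'}`. -/
def X4set (n : ℕ) (ε : ℝ) : Set (EuclideanSpace ℝ (Fin n)) :=
  {x | {i : Fin n | (i : ℕ) < n - 1 ∧
      x i = (3 * n + ε * Real.sqrt (10 * n - (n : ℝ) ^ 2)) / ((n : ℝ) * ((n : ℝ) - 1))}.ncard
        = n - 2 ∧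
    {i : Fin n | (i : ℕ) < n - 1 ∧
      x i = (-(n : ℝ) ^ 2 + 4 * n + ε * Real.sqrt (10 * n - (n : ℝ) ^ 2)) /
        ((n : ℝ) * ((n : ℝ) - 1))}.ncard = 1 ∧
    (∀ i : Fin n, (i : ℕ) = n - 1 → x i = -ε * Real.sqrt (10 * n - (n : ℝ) ^ 2) / n)}

/-!
For `i ≠ j` we have `‖y - (eᵢ + eⱼ)‖² = ‖y‖² - 2 (yᵢ + yⱼ) + 2`, so `y` is at
distance `√2` or `2` from every point of `J̃'(n-1,2)` exactly when every pair sum `yᵢ + yⱼ` of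
its first `n - 1` coordinates is `‖y‖²/2` or `‖y‖²/2 - 1`. Pair sums taking only two values force
those coordinates to be constant except at one place, so `y = (a, b^{n-2}, t)^{P'}`, and only
the two pair sums `b + b` and `a + b` remain; in particular `a - b ∈ {0, ±1}`. Together with
`a + (n-2) b + t = 2`, each of the four resulting cases is a quadratic equation for `b` whose two
roots are the families `X₁^±, X₂^±, X₃^±, X₄^±` (the discriminant `10n - n²` of the last one is
nonnegative only for `n ≤ 10`). Two distinct vectors of one family differ by swapping the
entries `a` and `b`, so they are at distance `√2 |a - b| = √2`.
-/

open Finset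

theorem Fintype.sum_eq_add_add_of_eq_off {ι R : Type*} [Fintype ι] [CommRing R] {f : ι → R}
    {m ℓ : ι} (hmℓ : m ≠ ℓ) {b : R} (h : ∀ i, i ≠ m → i ≠ ℓ → f i = b) :
    ∑ i, f i = f m + f ℓ + (Fintype.card ι - 2) * b := by
  have := Finset.sum_eq_add_of_mem (f := fun i => f i - b) m ℓ (mem_univ _) (mem_univ _) hmℓ
    fun i _ hi => sub_eq_zero.2 (h i hi.1 hi.2)
  rw [Finset.sum_sub_distrib, sum_const, card_univ, nsmul_eq_mul] at this
  linear_combination this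

theorem Set.ncard_setOf_eq_one_and_ncard_setOf_eq_iff {α β : Type*} {s : Set α} {k : ℕ}
    (hs : s.ncard = k + 1) {f : α → β} {a b : β} (hab : a ≠ b) :
    {i | i ∈ s ∧ f i = a}.ncard = 1 ∧ {i | i ∈ s ∧ f i = b}.ncard = k ↔
      ∃ m ∈ s, f m = a ∧ ∀ i ∈ s, i ≠ m → f i = b := by
  have hfin : s.Finite := Set.finite_of_ncard_pos (by omega)
  constructor
  · rintro ⟨ha, hb⟩
    obtain ⟨m, hm⟩ := Set.ncard_eq_one.1 ha
    have hmA : m ∈ {i | i ∈ s ∧ f i = a} := hm ▸ rfl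
    have cover : {i | i ∈ s ∧ f i = a} ∪ {i | i ∈ s ∧ f i = b} = s := by
      refine Set.eq_of_subset_of_ncard_le (Set.union_subset (fun i hi => hi.1) fun i hi => hi.1)
        ?_ hfin
      rw [Set.ncard_union_eq (Set.disjoint_left.2 fun i hia hib => hab (hia.2.symm.trans hib.2))
        (hfin.subset fun i hi => hi.1) (hfin.subset fun i hi => hi.1), ha, hb, hs, add_comm]
    refine ⟨m, hmA.1, hmA.2, fun i hi him => ?_⟩
    rcases cover.symm ▸ hi with hia | hib
    exacts [absurd (hm ▸ hia : i ∈ ({m} : Set α)) him, hib.2]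
  · rintro ⟨m, hm, hma, hb⟩
    have hA : {i | i ∈ s ∧ f i = a} = {m} := Set.ext fun i =>
      ⟨fun ⟨hi, hia⟩ => by_contra fun him => hab (hia.symm.trans (hb i hi him)),
        fun him => (Set.mem_singleton_iff.1 him) ▸ ⟨hm, hma⟩⟩
    have hB : {i | i ∈ s ∧ f i = b} = s \ {m} := Set.ext fun i =>
      ⟨fun ⟨hi, hib⟩ => ⟨hi, fun him => hab (hma.symm.trans ((Set.mem_singleton_iff.1 him) ▸ hib))⟩,
        fun ⟨hi, him⟩ => ⟨hi, hb i hi him⟩⟩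
    rw [hA, hB, Set.ncard_singleton, Set.ncard_sdiff_singleton_of_mem hm, hs]
    exact ⟨rfl, rfl⟩

theorem exists_sign_mul_of_sq_eq_sq {R : Type*} [CommRing R] [NoZeroDivisors R] {x d : R}
    (h : x ^ 2 = d ^ 2) : ∃ ε : R, (ε = 1 ∨ ε = -1) ∧ x = ε * d := by
  rcases sq_eq_sq_iff_eq_or_eq_neg.1 h with rfl | rfl
  exacts [⟨1, .inl rfl, (one_mul _).symm⟩, ⟨-1, .inr rfl, (neg_one_mul _).symm⟩]

theorem eq_or_eq_or_eq_of_eq_or_eq {α : Type*} {x y z p q : α} (hx : x = p ∨ x = q)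
    (hy : y = p ∨ y = q) (hz : z = p ∨ z = q) : x = y ∨ x = z ∨ y = z := by
  rcases hx with rfl | rfl <;> rcases hy with rfl | rfl <;> rcases hz with rfl | rfl <;> simp

theorem exists_forall_ne_eq_of_add_eq_or_eq {ι K : Type*} [CommRing K] [LinearOrder K]
    [IsStrictOrderedRing K] {s : Set ι} {f : ι → K} {p q : K}
    (h : ∀ i ∈ s, ∀ j ∈ s, i ≠ j → f i + f j = p ∨ f i + f j = q) (hs : s.Nonempty) :
    ∃ m ∈ s, ∃ b, ∀ i ∈ s, i ≠ m → f i = b := by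
  have three : ∀ i ∈ s, ∀ j ∈ s, ∀ k ∈ s, i ≠ j → i ≠ k → j ≠ k →
      f i = f j ∨ f i = f k ∨ f j = f k := fun i hi j hj k hk hij hik hjk => by
    by_contra! hne
    rcases eq_or_eq_or_eq_of_eq_or_eq (h i hi j hj hij) (h i hi k hk hik) (h j hj k hk hjk)
      with e | e | e
    exacts [hne.2.2 (by linarith), hne.2.1 (by linarith), hne.1 (by linarith)]
  by_contra! H
  obtain ⟨m, hm⟩ := hs
  obtain ⟨u, hu, hum, hfu⟩ := H m hm (f m)
  obtain ⟨v, hv, hvm, hfv⟩ := H m hm (f u)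
  obtain ⟨w, hw, hwu, hfw⟩ := H u hu (f m)
  have hmv : f m = f v := by
    rcases three m hm u hu v hv hum.symm hvm.symm fun e => hfv (congrArg f e).symm with e | e | e
    exacts [absurd e.symm hfu, e, absurd e.symm hfv]
  have huw : f u = f w := by
    rcases three u hu w hw m hm hwu.symm hum fun e => hfw (congrArg f e) with e | e | e
    exacts [e, absurd e hfu, absurd e hfw]
  -- `f m, f v` and `f u, f w` are two pairs of equal values, so `2 f m`, `2 f u`, `f m + f u`
  -- would be three distinct pair sums
  rcases eq_or_eq_or_eq_of_eq_or_eq (h m hm v hv hvm.symm) (h u hu w hw hwu.symm)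
    (h v hv u hu fun e => hfv (congrArg f e)) with e | e | e <;>
  exact hfu (by linarith)

theorem dist_sq_single_add_single {ι : Type*} [Fintype ι] [DecidableEq ι]
    (y : EuclideanSpace ℝ ι) {i j : ι} (hij : i ≠ j) :
    dist y (EuclideanSpace.single i 1 + EuclideanSpace.single j 1) ^ 2 =
      ‖y‖ ^ 2 - 2 * (y i + y j) + 2 := by
  rw [dist_eq_norm, norm_sub_sq_real, norm_add_sq_real, inner_add_right,
    EuclideanSpace.inner_single_right, EuclideanSpace.inner_single_right,
    EuclideanSpace.inner_single_right]
  simp [hij]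
  ring

theorem norm_sq_single_add_single {ι : Type*} [Fintype ι] [DecidableEq ι] {i j : ι} (hij : i ≠ j) :
    ‖EuclideanSpace.single i (1 : ℝ) + EuclideanSpace.single j 1‖ ^ 2 = 2 := by
  simpa using dist_sq_single_add_single (0 : EuclideanSpace ℝ ι) hij

theorem mem_sqrt_two_two_iff {d : ℝ} (hd : 0 ≤ d) :
    d ∈ ({√2, 2} : Set ℝ) ↔ d ^ 2 = 2 ∨ d ^ 2 = 4 := by
  rw [Set.mem_insert_iff, Set.mem_singleton_iff, eq_comm, Real.sqrt_eq_iff_eq_sq zero_le_two hd,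
    eq_comm, ← sq_eq_sq₀ hd zero_le_two]
  norm_num

section DistanceSets

variable {n : ℕ}

theorem distSet_mono {S S' : Set (EuclideanSpace ℝ (Fin n))} (h : S ⊆ S') :
    distSet S ⊆ distSet S' := by
  rintro d ⟨x, hx, y, hy, hxy, rfl⟩
  exact ⟨x, h hx, y, h hy, hxy, rfl⟩

theorem distSet_singleton (y : EuclideanSpace ℝ (Fin n)) : distSet {y} = ∅ := by
  refine Set.eq_empty_iff_forall_notMem.2 ?_
  rintro d ⟨x, rfl, z, rfl, h, -⟩
  exact h rfl

theorem distSet_union_subset_iff {S S' : Set (EuclideanSpace ℝ (Fin n))} {D : Set ℝ} :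
    distSet (S ∪ S') ⊆ D ↔
      distSet S ⊆ D ∧ distSet S' ⊆ D ∧ ∀ x ∈ S, ∀ x' ∈ S', x ≠ x' → dist x x' ∈ D := by
  refine ⟨fun h => ⟨(distSet_mono Set.subset_union_left).trans h,
    (distSet_mono Set.subset_union_right).trans h,
    fun x hx x' hx' hne => h ⟨x, .inl hx, x', .inr hx', hne, rfl⟩⟩, ?_⟩
  rintro ⟨hS, hS', hSS'⟩ d ⟨x, hx | hx, x', hx' | hx', hne, rfl⟩
  · exact hS ⟨x, hx, x', hx', hne, rfl⟩
  · exact hSS' x hx x' hx' hne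
  · exact dist_comm x x' ▸ hSS' x' hx' x hx hne.symm
  · exact hS' ⟨x, hx, x', hx', hne, rfl⟩

theorem isSDistanceSet_two_iff {S : Set (EuclideanSpace ℝ (Fin n))} {p q : ℝ} (hpq : p ≠ q)
    (h : {p, q} ⊆ distSet S) : IsSDistanceSet 2 S ↔ distSet S ⊆ {p, q} := by
  refine ⟨fun ⟨hfin, hcard⟩ =>
    (Set.eq_of_subset_of_ncard_le h (by rw [hcard, Set.ncard_pair hpq]) hfin).superset,
    fun h' => ?_⟩
  rw [IsSDistanceSet, h'.antisymm h]
  exact ⟨Set.toFinite _, Set.ncard_pair hpq⟩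

end DistanceSets

section Johnson

variable {n : ℕ}

theorem dist_mem_of_mem_johnsonRep' {u v : EuclideanSpace ℝ (Fin n)} (hu : u ∈ JohnsonRep' n)
    (hv : v ∈ JohnsonRep' n) (huv : u ≠ v) : dist u v ∈ ({√2, 2} : Set ℝ) := by
  obtain ⟨i, j, hij, -, rfl⟩ := hu
  obtain ⟨k, l, hkl, -, rfl⟩ := hv
  rw [mem_sqrt_two_two_iff dist_nonneg, dist_sq_single_add_single _ (Fin.ne_of_lt hkl),
    norm_sq_single_add_single (Fin.ne_of_lt hij)]
  simp only [PiLp.add_apply, PiLp.single_apply]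
  split_ifs <;> subst_vars <;> norm_num <;> first | exact huv rfl | omega

theorem pair_subset_distSet_johnsonRep' (hn : 5 ≤ n) : {√2, 2} ⊆ distSet (JohnsonRep' n) := by
  let e : ℕ → Fin n := fun i => ⟨min i 3, by omega⟩
  let v : ℕ → ℕ → EuclideanSpace ℝ (Fin n) := fun i j =>
    EuclideanSpace.single (e i) 1 + EuclideanSpace.single (e j) 1
  have hne : ∀ i j, i < j → j ≤ 3 → e i ≠ e j := fun i j hij hj =>
    Fin.ne_of_val_ne (by simp only [e]; omega)
  have mem : ∀ i j, i < j → j ≤ 3 → v i j ∈ JohnsonRep' n := fun i j hij hj =>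
    ⟨e i, e j, by simp only [e]; omega, by simp only [e]; omega, rfl⟩
  have dist_sq : ∀ i j, i < j → j ≤ 3 →
      dist (v 0 1) (v i j) ^ 2 = 4 - 2 * (v 0 1 (e i) + v 0 1 (e j)) := fun i j hij hj => by
    rw [dist_sq_single_add_single _ (hne i j hij hj),
      norm_sq_single_add_single (hne 0 1 one_pos (by norm_num))]
    ring
  have d12 : dist (v 0 1) (v 1 2) = √2 := by
    rw [eq_comm, Real.sqrt_eq_iff_eq_sq zero_le_two dist_nonneg, dist_sq 1 2 (by omega) (by omega)]
    norm_num [v, e]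
  have d23 : dist (v 0 1) (v 2 3) = 2 := by
    rw [← sq_eq_sq₀ dist_nonneg zero_le_two, dist_sq 2 3 (by omega) le_rfl]
    norm_num [v, e]
  rintro d (rfl | rfl)
  · exact ⟨_, mem 0 1 (by omega) (by omega), _, mem 1 2 (by omega) (by omega),
      dist_ne_zero.1 (by rw [d12]; positivity), d12.symm⟩
  · exact ⟨_, mem 0 1 (by omega) (by omega), _, mem 2 3 (by omega) le_rfl,
      dist_ne_zero.1 (by rw [d23]; positivity), d23.symm⟩

theorem isSDistanceSet_two_johnsonRep'_union_iff (hn : 5 ≤ n) (S : Set (EuclideanSpace ℝ (Fin n))) :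
    IsSDistanceSet 2 (JohnsonRep' n ∪ S) ↔ distSet S ⊆ {√2, 2} ∧
      ∀ u ∈ JohnsonRep' n, ∀ x ∈ S, u ≠ x → dist u x ∈ ({√2, 2} : Set ℝ) := by
  rw [isSDistanceSet_two_iff ((Real.sqrt_lt' two_pos).2 (by norm_num)).ne
    ((pair_subset_distSet_johnsonRep' hn).trans (distSet_mono Set.subset_union_left)),
    distSet_union_subset_iff]
  exact and_iff_right fun d ⟨u, hu, v, hv, huv, hd⟩ => hd ▸ dist_mem_of_mem_johnsonRep' hu hv huv

theorem isSDistanceSet_two_johnsonRep'_union_singleton_iff (hn : 5 ≤ n)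
    {y : EuclideanSpace ℝ (Fin n)} (hy : y ∉ JohnsonRep' n) :
    IsSDistanceSet 2 (JohnsonRep' n ∪ {y}) ↔
      ∀ u ∈ JohnsonRep' n, dist u y ∈ ({√2, 2} : Set ℝ) := by
  simp only [isSDistanceSet_two_johnsonRep'_union_iff hn, distSet_singleton,
    Set.empty_subset, true_and, Set.mem_singleton_iff, forall_eq]
  exact forall₂_congr fun u hu => ⟨fun h => h (ne_of_mem_of_not_mem hu hy), fun h _ => h⟩

end Johnson

section Profile

variable {n : ℕ} {y y' : EuclideanSpace ℝ (Fin n)} {a b t : ℝ}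

/-- `y ∈ (a, b^{n-2}, t)^{P'}` in the notation of the paper. -/
def HasProfile (y : EuclideanSpace ℝ (Fin n)) (a b t : ℝ) : Prop :=
  ∃ m : Fin n, (m : ℕ) < n - 1 ∧ y m = a ∧ (∀ i : Fin n, (i : ℕ) < n - 1 → i ≠ m → y i = b) ∧
    ∀ i : Fin n, (i : ℕ) = n - 1 → y i = t

theorem HasProfile.sum_apply (hy : HasProfile y a b t) (g : ℝ → ℝ) :
    ∑ i, g (y i) = g a + (n - 2) * g b + g t := by
  obtain ⟨m, hm, hma, hb, ht⟩ := hy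
  let ℓ : Fin n := ⟨n - 1, by omega⟩
  have hℓ : ∀ i : Fin n, i ≠ ℓ → (i : ℕ) < n - 1 := fun i hi => by
    have : (i : ℕ) ≠ n - 1 := fun h => hi (Fin.ext h)
    omega
  rw [Fintype.sum_eq_add_add_of_eq_off (m := m) (ℓ := ℓ) (Fin.ne_of_val_ne hm.ne)
    fun i him hiℓ => by rw [hb i (hℓ i hiℓ) him], hma, ht ℓ rfl, Fintype.card_fin]
  ring

theorem HasProfile.sum_eq (hy : HasProfile y a b t) : ∑ i, y i = a + (n - 2) * b + t :=
  hy.sum_apply id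

theorem HasProfile.norm_sq (hy : HasProfile y a b t) :
    ‖y‖ ^ 2 = a ^ 2 + (n - 2) * b ^ 2 + t ^ 2 := by
  rw [EuclideanSpace.real_norm_sq_eq]
  exact hy.sum_apply (· ^ 2)

theorem HasProfile.dist_sq (hy : HasProfile y a b t) (hy' : HasProfile y' a b t) (hne : y ≠ y') :
    dist y y' ^ 2 = 2 * (a - b) ^ 2 := by
  obtain ⟨m, hm, hma, hmb, hmt⟩ := hy
  obtain ⟨m', hm', hma', hmb', hmt'⟩ := hy'
  have off : ∀ i, i ≠ m → i ≠ m' → y i = y' i := fun i him him' => by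
    rcases (by omega : (i : ℕ) < n - 1 ∨ (i : ℕ) = n - 1) with hi | hi
    · rw [hmb i hi him, hmb' i hi him']
    · rw [hmt i hi, hmt' i hi]
  have hmm : m ≠ m' := by
    rintro rfl
    exact hne (PiLp.ext fun i => if h : i = m then by rw [h, hma, hma'] else off i h h)
  rw [EuclideanSpace.dist_eq, Real.sq_sqrt (by positivity),
    Finset.sum_eq_add_of_mem m m' (mem_univ _) (mem_univ _) hmm
      fun i _ hi => by simp [off i hi.1 hi.2],
    Real.dist_eq, Real.dist_eq, sq_abs, sq_abs, hma, hmb' m hm hmm, hmb m' hm' (Ne.symm hmm), hma']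
  ring

theorem hasProfile_iff_forall (hn : 2 ≤ n) : HasProfile y b b t ↔
    (∀ i : Fin n, (i : ℕ) < n - 1 → y i = b) ∧ ∀ i : Fin n, (i : ℕ) = n - 1 → y i = t :=
  ⟨fun ⟨m, _, hma, hb, ht⟩ => ⟨fun i hi => if h : i = m then h ▸ hma else hb i hi h, ht⟩,
    fun ⟨hb, ht⟩ => ⟨⟨0, by omega⟩, by simp only; omega, hb _ (by simp only; omega),
      fun i hi _ => hb i hi, ht⟩⟩

theorem hasProfile_iff_ncard (hn : 2 ≤ n) (hab : a ≠ b) : HasProfile y a b t ↔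
    {i : Fin n | (i : ℕ) < n - 1 ∧ y i = a}.ncard = 1 ∧
      {i : Fin n | (i : ℕ) < n - 1 ∧ y i = b}.ncard = n - 2 ∧
      ∀ i : Fin n, (i : ℕ) = n - 1 → y i = t := by
  have hT : {i : Fin n | (i : ℕ) < n - 1}.ncard = n - 2 + 1 := by
    rw [Set.ncard_eq_toFinset_card', Set.toFinset_ofPred, Fin.card_filter_val_lt]
    omega
  have key := Set.ncard_setOf_eq_one_and_ncard_setOf_eq_iff hT (f := fun i => y i) hab
  refine ⟨fun ⟨m, hm, hma, hb, ht⟩ => ⟨(key.2 ⟨m, hm, hma, hb⟩).1, (key.2 ⟨m, hm, hma, hb⟩).2, ht⟩,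
    fun ⟨h1, h2, ht⟩ => ?_⟩
  obtain ⟨m, hm, hma, hb⟩ := key.1 ⟨h1, h2⟩
  exact ⟨m, hm, hma, hb, ht⟩

end Profile

/-- `A - 2 s + 2 ∈ {2, 4}`: for `A = ‖y‖²` and `s = yᵢ + yⱼ` this is the squared distance from
`y` to `eᵢ + eⱼ`. -/
def IsAdmissibleSum (A s : ℝ) : Prop := 2 * s = A ∨ 2 * s = A - 2

/-- `b + b` and `a + b` are the only pair sums of the first `n - 1` coordinates of a vector with
profile `(a, b^{n-2}, t)`. -/
def IsAddableProfile (n : ℕ) (a b t : ℝ) : Prop :=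
  IsAdmissibleSum (a ^ 2 + (n - 2) * b ^ 2 + t ^ 2) (b + b) ∧
    IsAdmissibleSum (a ^ 2 + (n - 2) * b ^ 2 + t ^ 2) (a + b)

theorem dist_single_add_single_mem_iff {ι : Type*} [Fintype ι] [DecidableEq ι]
    (y : EuclideanSpace ℝ ι) {i j : ι} (hij : i ≠ j) :
    dist (EuclideanSpace.single i 1 + EuclideanSpace.single j 1) y ∈ ({√2, 2} : Set ℝ) ↔
      IsAdmissibleSum (‖y‖ ^ 2) (y i + y j) := by
  rw [mem_sqrt_two_two_iff dist_nonneg, dist_comm, dist_sq_single_add_single y hij,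
    IsAdmissibleSum]
  constructor <;> rintro (h | h) <;> [left; right; left; right] <;> linarith

section PairSums

variable {n : ℕ} {y : EuclideanSpace ℝ (Fin n)} {a b t : ℝ}

theorem forall_dist_johnsonRep'_mem_iff :
    (∀ u ∈ JohnsonRep' n, dist u y ∈ ({√2, 2} : Set ℝ)) ↔
      ∀ i j : Fin n, (i : ℕ) < n - 1 → (j : ℕ) < n - 1 → i ≠ j →
        IsAdmissibleSum (‖y‖ ^ 2) (y i + y j) := by
  refine ⟨fun h i j hi hj hij => ?_, ?_⟩
  · rcases lt_or_gt_of_ne hij with hlt | hlt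
    · exact (dist_single_add_single_mem_iff y hij).1 (h _ ⟨i, j, hlt, hj, rfl⟩)
    · rw [add_comm]
      exact (dist_single_add_single_mem_iff y hij.symm).1 (h _ ⟨j, i, hlt, hi, rfl⟩)
  · rintro h _ ⟨i, j, hij, hj, rfl⟩
    exact (dist_single_add_single_mem_iff y (Fin.ne_of_lt hij)).2
      (h i j (by omega) hj (Fin.ne_of_lt hij))

theorem exists_hasProfile_of_forall_isAdmissibleSum (hn : 2 ≤ n)
    (h : ∀ i j : Fin n, (i : ℕ) < n - 1 → (j : ℕ) < n - 1 → i ≠ j →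
      IsAdmissibleSum (‖y‖ ^ 2) (y i + y j)) :
    ∃ a b t, HasProfile y a b t := by
  obtain ⟨m, hm, b, hb⟩ := exists_forall_ne_eq_of_add_eq_or_eq
    (s := {i : Fin n | (i : ℕ) < n - 1}) (f := fun i => y i)
    (p := ‖y‖ ^ 2 / 2) (q := ‖y‖ ^ 2 / 2 - 1) (fun i hi j hj hij => by
      rcases h i j hi hj hij with e | e <;> [left; right] <;> linarith)
    ⟨⟨0, by omega⟩, show 0 < n - 1 by omega⟩
  exact ⟨y m, b, y ⟨n - 1, by omega⟩, m, hm, rfl, hb, fun i hi => congrArg y (Fin.ext hi)⟩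

theorem exists_two_ne_of_four_le (hn : 4 ≤ n) (m : Fin n) :
    ∃ i j : Fin n, (i : ℕ) < n - 1 ∧ (j : ℕ) < n - 1 ∧ i ≠ m ∧ j ≠ m ∧ i ≠ j := by
  refine ⟨⟨if (m : ℕ) = 0 then 2 else 0, by split_ifs <;> omega⟩,
    ⟨if (m : ℕ) = 1 then 2 else 1, by split_ifs <;> omega⟩, ?_, ?_, ?_, ?_, ?_⟩ <;>
  simp only [ne_eq, Fin.ext_iff] <;> split_ifs <;> first | omega | exact not_false

theorem HasProfile.forall_isAdmissibleSum_iff (hn : 4 ≤ n) (hy : HasProfile y a b t) :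
    (∀ i j : Fin n, (i : ℕ) < n - 1 → (j : ℕ) < n - 1 → i ≠ j →
      IsAdmissibleSum (‖y‖ ^ 2) (y i + y j)) ↔ IsAddableProfile n a b t := by
  rw [hy.norm_sq]
  obtain ⟨m, hm, hma, hb, -⟩ := hy
  refine ⟨fun h => ?_, fun ⟨hbb, hab⟩ i j hi hj hij => ?_⟩
  · obtain ⟨i, j, hi, hj, him, hjm, hij⟩ := exists_two_ne_of_four_le hn m
    have hbb := h i j hi hj hij
    have hab := h m i hm hi (Ne.symm him)
    rw [hb i hi him, hb j hj hjm] at hbb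
    rw [hma, hb i hi him] at hab
    exact ⟨hbb, hab⟩
  · by_cases him : i = m
    · rwa [him, hma, hb j hj fun h => hij (him.trans h.symm)]
    by_cases hjm : j = m
    · rwa [hjm, hma, hb i hi him, add_comm b a]
    rwa [hb i hi him, hb j hj hjm]

theorem forall_dist_johnsonRep'_mem_iff_exists (hn : 4 ≤ n) :
    (∀ u ∈ JohnsonRep' n, dist u y ∈ ({√2, 2} : Set ℝ)) ↔
      ∃ a b t, HasProfile y a b t ∧ IsAddableProfile n a b t := by
  rw [forall_dist_johnsonRep'_mem_iff]
  refine ⟨fun h => ?_, fun ⟨a, b, t, hy, hadd⟩ => (hy.forall_isAdmissibleSum_iff hn).2 hadd⟩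
  obtain ⟨a, b, t, hy⟩ := exists_hasProfile_of_forall_isAdmissibleSum (by omega) h
  exact ⟨a, b, t, hy, (hy.forall_isAdmissibleSum_iff hn).1 h⟩

end PairSums

section Algebra

variable {n : ℕ} {y : EuclideanSpace ℝ (Fin n)} {a b t ε : ℝ}

/-- Completing the square in `b`, after eliminating `a = b + δ` and `t` by the equation of `H`. -/
theorem two_mul_add_self_eq_iff (hn : 2 ≤ n) (hsum : a + (n - 2) * b + t = 2) (δ w : ℝ)
    (hδ : a - b = δ) :
    2 * (b + b) = a ^ 2 + (n - 2) * b ^ 2 + t ^ 2 - 2 * w ↔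
      (n * (n - 1) * b - n * (2 - δ)) ^ 2 =
        n ^ 2 * (2 - δ) ^ 2 - n * (n - 1) * (δ ^ 2 + (2 - δ) ^ 2 - 2 * w) := by
  have hn' : (2 : ℝ) ≤ n := by exact_mod_cast hn
  have hN : (n : ℝ) * (n - 1) ≠ 0 := (mul_pos (by linarith) (by linarith)).ne'
  obtain rfl : a = b + δ := by linarith
  obtain rfl : t = 2 - δ - (n - 1) * b := by linarith
  rw [← mul_right_inj' hN]
  constructor <;> intro h <;> linear_combination -h

theorem isAddableProfile_of_eq_sign_mul (hn : 2 ≤ n) (hsum : a + (n - 2) * b + t = 2)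
    {δ w d : ℝ} (hδ : a - b = δ) (hw : w = 0 ∨ w = 1) (hδw : w - δ = 0 ∨ w - δ = 1)
    (hε : ε = 1 ∨ ε = -1) (hc : n * (n - 1) * b - n * (2 - δ) = ε * d)
    (hd : d ^ 2 = n ^ 2 * (2 - δ) ^ 2 - n * (n - 1) * (δ ^ 2 + (2 - δ) ^ 2 - 2 * w)) :
    IsAddableProfile n a b t := by
  have hε2 : ε ^ 2 = 1 := by rcases hε with rfl | rfl <;> norm_num
  have h := (two_mul_add_self_eq_iff hn hsum δ w hδ).2 (by rw [hc, mul_pow, hε2, one_mul, hd])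
  constructor
  · rcases hw with rfl | rfl <;> [left; right] <;> linarith
  · rcases hδw with h' | h' <;> [left; right] <;> linarith

theorem exists_mem_X1set (hn : 2 ≤ n) (hy : HasProfile y a b t)
    (hsum : a + (n - 2) * b + t = 2)
    (hbb : 2 * (b + b) = a ^ 2 + (n - 2) * b ^ 2 + t ^ 2) (hδ : a - b = 0) :
    ∃ ε : ℝ, (ε = 1 ∨ ε = -1) ∧ y ∈ X1set n ε := by
  have hn' : (2 : ℝ) ≤ n := by exact_mod_cast hn
  have hN : (n : ℝ) * (n - 1) ≠ 0 := (mul_pos (by linarith) (by linarith)).ne'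
  obtain ⟨ε, hε, hc⟩ := exists_sign_mul_of_sq_eq_sq <|
    ((two_mul_add_self_eq_iff hn hsum 0 0 hδ).1 (by linarith)).trans
      (show _ = (2 * √n) ^ 2 by rw [mul_pow, Real.sq_sqrt (by positivity)]; ring)
  obtain rfl : a = b := by linarith
  have hb : a = (2 * n + ε * (2 * √n)) / (n * (n - 1)) := by
    rw [eq_div_iff hN]; linear_combination hc
  have ht : t = -ε * (2 * √n) / n := by
    rw [eq_div_iff (by positivity)]; linear_combination n * hsum - hc
  rw [hb, ht] at hy
  exact ⟨ε, hε, (hasProfile_iff_forall hn).1 hy⟩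

theorem exists_mem_X2set (hn : 2 ≤ n) (hy : HasProfile y a b t)
    (hsum : a + (n - 2) * b + t = 2)
    (hbb : 2 * (b + b) = a ^ 2 + (n - 2) * b ^ 2 + t ^ 2 - 2) (hδ : a - b = 0) :
    ∃ ε : ℝ, (ε = 1 ∨ ε = -1) ∧ y ∈ X2set n ε := by
  have hn' : (2 : ℝ) ≤ n := by exact_mod_cast hn
  have hN : (n : ℝ) * (n - 1) ≠ 0 := (mul_pos (by linarith) (by linarith)).ne'
  obtain ⟨ε, hε, hc⟩ := exists_sign_mul_of_sq_eq_sq <|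
    ((two_mul_add_self_eq_iff hn hsum 0 1 hδ).1 (by linarith)).trans
      (show _ = √(2 * (n : ℝ) ^ 2 + 2 * n) ^ 2 by rw [Real.sq_sqrt (by positivity)]; ring)
  obtain rfl : a = b := by linarith
  have hb : a = (2 * n + ε * √(2 * (n : ℝ) ^ 2 + 2 * n)) / (n * (n - 1)) := by
    rw [eq_div_iff hN]; linear_combination hc
  have ht : t = -ε * √(2 * (n : ℝ) ^ 2 + 2 * n) / n := by
    rw [eq_div_iff (by positivity)]; linear_combination n * hsum - hc
  rw [hb, ht] at hy
  exact ⟨ε, hε, (hasProfile_iff_forall hn).1 hy⟩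

theorem exists_mem_X3set (hn : 2 ≤ n) (hy : HasProfile y a b t)
    (hsum : a + (n - 2) * b + t = 2)
    (hbb : 2 * (b + b) = a ^ 2 + (n - 2) * b ^ 2 + t ^ 2 - 2) (hδ : a - b = 1) :
    ∃ ε : ℝ, (ε = 1 ∨ ε = -1) ∧ y ∈ X3set n ε := by
  have hn' : (2 : ℝ) ≤ n := by exact_mod_cast hn
  have h1 : (n : ℝ) - 1 ≠ 0 := by linarith
  obtain ⟨ε, hε, hc⟩ := exists_sign_mul_of_sq_eq_sq <|
    ((two_mul_add_self_eq_iff hn hsum 1 1 hδ).1 (by linarith)).trans (show _ = (n : ℝ) ^ 2 by ring)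
  have hb' : b * (n - 1) = 1 + ε :=
    mul_left_cancel₀ (by positivity : (n : ℝ) ≠ 0) (by linear_combination hc)
  have hb : b = (1 + ε) / (n - 1) := by rw [eq_div_iff h1]; exact hb'
  have ha : a = (n + ε) / (n - 1) := by rw [eq_div_iff h1]; linear_combination (n - 1) * hδ + hb'
  have ht : t = -ε := by linear_combination hsum - hδ - hb'
  have hab : a ≠ b := fun h => by linarith
  rw [ha, hb, ht] at hy
  rw [ha, hb] at hab
  exact ⟨ε, hε, (hasProfile_iff_ncard hn hab).1 hy⟩

theorem exists_mem_X4set (hn : 2 ≤ n) (hy : HasProfile y a b t)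
    (hsum : a + (n - 2) * b + t = 2)
    (hbb : 2 * (b + b) = a ^ 2 + (n - 2) * b ^ 2 + t ^ 2) (hδ : a - b = -1) :
    n ≤ 10 ∧ ∃ ε : ℝ, (ε = 1 ∨ ε = -1) ∧ y ∈ X4set n ε := by
  have hn' : (2 : ℝ) ≤ n := by exact_mod_cast hn
  have hN : (n : ℝ) * (n - 1) ≠ 0 := (mul_pos (by linarith) (by linarith)).ne'
  have hsq := (two_mul_add_self_eq_iff hn hsum (-1) 0 hδ).1 (by linarith)
  have hD : 0 ≤ 10 * (n : ℝ) - n ^ 2 := by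
    nlinarith [sq_nonneg ((n : ℝ) * (n - 1) * b - n * (2 - -1))]
  have h10 : n ≤ 10 := by
    have : (n : ℝ) ≤ 10 := by nlinarith
    exact_mod_cast this
  obtain ⟨ε, hε, hc⟩ := exists_sign_mul_of_sq_eq_sq <|
    hsq.trans (show _ = √(10 * (n : ℝ) - n ^ 2) ^ 2 by rw [Real.sq_sqrt hD]; ring)
  have hb : b = (3 * n + ε * √(10 * (n : ℝ) - n ^ 2)) / (n * (n - 1)) := by
    rw [eq_div_iff hN]; linear_combination hc
  have ha : a = (-(n : ℝ) ^ 2 + 4 * n + ε * √(10 * (n : ℝ) - n ^ 2)) / (n * (n - 1)) := by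
    rw [eq_div_iff hN]; linear_combination hc + n * (n - 1) * hδ
  have ht : t = -ε * √(10 * (n : ℝ) - n ^ 2) / n := by
    rw [eq_div_iff (by positivity)]; linear_combination n * hsum - hc - n * hδ
  have hab : a ≠ b := fun h => by linarith
  rw [ha, hb, ht] at hy
  rw [ha, hb] at hab
  obtain ⟨h1, h2, h3⟩ := (hasProfile_iff_ncard hn hab).1 hy
  exact ⟨h10, ε, hε, h2, h1, h3⟩

end Algebra

section Classes

variable {n : ℕ} {X : Set (EuclideanSpace ℝ (Fin n))} {u v y : EuclideanSpace ℝ (Fin n)}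
  {a b t ε : ℝ}

def IsAddableClass (n : ℕ) (X : Set (EuclideanSpace ℝ (Fin n))) : Prop :=
  ∃ a b t, IsAddableProfile n a b t ∧ ∀ y ∈ X, HasProfile y a b t

theorem isAddableClass_X1set (hn : 2 ≤ n) (hε : ε = 1 ∨ ε = -1) : IsAddableClass n (X1set n ε) := by
  have hn' : (2 : ℝ) ≤ n := by exact_mod_cast hn
  have h1 : (n : ℝ) - 1 ≠ 0 := by linarith
  refine ⟨_, _, _, ?_, fun y hy => (hasProfile_iff_forall hn).2 hy⟩
  refine isAddableProfile_of_eq_sign_mul hn ?_ (sub_self _) (.inl rfl) (.inl (sub_self 0)) hε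
    (d := 2 * √n) ?_ ?_
  · field_simp; ring
  · field_simp; ring
  · rw [mul_pow, Real.sq_sqrt (by positivity)]; ring

theorem isAddableClass_X2set (hn : 2 ≤ n) (hε : ε = 1 ∨ ε = -1) : IsAddableClass n (X2set n ε) := by
  have hn' : (2 : ℝ) ≤ n := by exact_mod_cast hn
  have h1 : (n : ℝ) - 1 ≠ 0 := by linarith
  refine ⟨_, _, _, ?_, fun y hy => (hasProfile_iff_forall hn).2 hy⟩
  refine isAddableProfile_of_eq_sign_mul hn ?_ (sub_self _) (.inr rfl) (.inr (sub_zero 1)) hε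
    (d := √(2 * (n : ℝ) ^ 2 + 2 * n)) ?_ ?_
  · field_simp; ring
  · field_simp; ring
  · rw [Real.sq_sqrt (by positivity)]; ring

theorem isAddableClass_X3set (hn : 2 ≤ n) (hε : ε = 1 ∨ ε = -1) : IsAddableClass n (X3set n ε) := by
  have hn' : (2 : ℝ) ≤ n := by exact_mod_cast hn
  have h1 : (n : ℝ) - 1 ≠ 0 := by linarith
  have hab : ((n : ℝ) + ε) / (n - 1) ≠ (1 + ε) / (n - 1) := fun h => by
    field_simp at h; linarith
  refine ⟨_, _, _, ?_, fun y hy => (hasProfile_iff_ncard hn hab).2 hy⟩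
  refine isAddableProfile_of_eq_sign_mul hn ?_ (δ := 1) ?_ (.inr rfl) (.inl (sub_self 1)) hε
    (d := n) ?_ ?_
  · field_simp; ring
  · field_simp; ring
  · field_simp; ring
  · ring

theorem isAddableClass_X4set (hn : 2 ≤ n) (h10 : n ≤ 10) (hε : ε = 1 ∨ ε = -1) :
    IsAddableClass n (X4set n ε) := by
  have hn' : (2 : ℝ) ≤ n := by exact_mod_cast hn
  have h10' : (n : ℝ) ≤ 10 := by exact_mod_cast h10
  have h1 : (n : ℝ) - 1 ≠ 0 := by linarith
  have hab : (-(n : ℝ) ^ 2 + 4 * n + ε * √(10 * n - (n : ℝ) ^ 2)) / (n * (n - 1)) ≠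
      (3 * n + ε * √(10 * n - (n : ℝ) ^ 2)) / (n * (n - 1)) := fun h => by
    field_simp at h; nlinarith
  refine ⟨_, _, _, ?_, fun y hy => (hasProfile_iff_ncard hn hab).2 ⟨hy.2.1, hy.1, hy.2.2⟩⟩
  refine isAddableProfile_of_eq_sign_mul hn ?_ (δ := -1) ?_ (.inl rfl) (.inr (by norm_num)) hε
    (d := √(10 * n - (n : ℝ) ^ 2)) ?_ ?_
  · field_simp; ring
  · field_simp; ring
  · field_simp; ring
  · rw [Real.sq_sqrt (by nlinarith)]; ring

theorem IsAddableClass.dist_eq_sqrt_two (hX : IsAddableClass n X) (hu : u ∈ X) (hv : v ∈ X)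
    (huv : u ≠ v) : dist u v = √2 := by
  obtain ⟨a, b, t, ⟨hbb, hab⟩, hp⟩ := hX
  have hd := (hp u hu).dist_sq (hp v hv) huv
  have hδ : a - b = 0 ∨ (a - b) ^ 2 = 1 := by
    rcases hbb with h₁ | h₁ <;> rcases hab with h₂ | h₂
    exacts [.inl (by linarith), .inr (by rw [show a - b = -1 by linarith]; norm_num),
      .inr (by rw [show a - b = 1 by linarith]; norm_num), .inl (by linarith)]
  rcases hδ with hδ | hδ
  · rw [hδ] at hd
    exact (dist_ne_zero.2 huv ((pow_eq_zero_iff two_ne_zero).1 (by rw [hd]; norm_num))).elim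
  · rw [hδ, mul_one] at hd
    exact ((Real.sqrt_eq_iff_eq_sq zero_le_two dist_nonneg).2 hd.symm).symm

theorem IsAddableClass.isSDistanceSet_two_johnsonRep'_union (hn : 5 ≤ n)
    (hX : IsAddableClass n X) : IsSDistanceSet 2 (JohnsonRep' n ∪ X) := by
  refine (isSDistanceSet_two_johnsonRep'_union_iff hn X).2 ⟨?_, fun u hu x hx _ => ?_⟩
  · rintro d ⟨u, hu, v, hv, huv, rfl⟩
    exact .inl (hX.dist_eq_sqrt_two hu hv huv)
  · obtain ⟨a, b, t, hadd, hp⟩ := hX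
    exact (forall_dist_johnsonRep'_mem_iff_exists (by omega)).2 ⟨a, b, t, hp x hx, hadd⟩ u hu

def addableFamilies (n : ℕ) : Set (Set (EuclideanSpace ℝ (Fin n))) :=
  {X1set n 1, X1set n (-1), X2set n 1, X2set n (-1), X3set n 1, X3set n (-1)} ∪
    if n ≤ 10 then {X4set n 1, X4set n (-1)} else ∅

theorem isAddableClass_of_mem_addableFamilies (hn : 2 ≤ n) (hX : X ∈ addableFamilies n) :
    IsAddableClass n X := by
  rcases hX with hX | hX
  · simp only [Set.mem_insert_iff, Set.mem_singleton_iff] at hX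
    rcases hX with rfl | rfl | rfl | rfl | rfl | rfl
    exacts [isAddableClass_X1set hn (.inl rfl), isAddableClass_X1set hn (.inr rfl),
      isAddableClass_X2set hn (.inl rfl), isAddableClass_X2set hn (.inr rfl),
      isAddableClass_X3set hn (.inl rfl), isAddableClass_X3set hn (.inr rfl)]
  · split_ifs at hX with h10
    · rcases hX with rfl | rfl
      exacts [isAddableClass_X4set hn h10 (.inl rfl), isAddableClass_X4set hn h10 (.inr rfl)]
    · exact absurd hX (Set.notMem_empty X)

theorem exists_mem_addableFamilies_of_hasProfile (hn : 2 ≤ n) (hyH : y ∈ Hyp2 n)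
    (hy : HasProfile y a b t) (hadd : IsAddableProfile n a b t) :
    ∃ X ∈ addableFamilies n, y ∈ X := by
  have hsum : a + (n - 2) * b + t = 2 := hy.sum_eq ▸ hyH
  obtain ⟨hbb, hab⟩ := hadd
  rcases hbb with hbb | hbb <;> rcases hab with hab | hab
  · obtain ⟨ε, hε, h⟩ := exists_mem_X1set hn hy hsum hbb (by linarith)
    exact ⟨_, by rcases hε with rfl | rfl <;> simp [addableFamilies], h⟩
  · obtain ⟨h10, ε, hε, h⟩ := exists_mem_X4set hn hy hsum hbb (by linarith)
    exact ⟨_, by rcases hε with rfl | rfl <;> simp [addableFamilies, h10], h⟩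
  · obtain ⟨ε, hε, h⟩ := exists_mem_X3set hn hy hsum hbb (by linarith)
    exact ⟨_, by rcases hε with rfl | rfl <;> simp [addableFamilies], h⟩
  · obtain ⟨ε, hε, h⟩ := exists_mem_X2set hn hy hsum hbb (by linarith)
    exact ⟨_, by rcases hε with rfl | rfl <;> simp [addableFamilies], h⟩

theorem exists_hasProfile_iff_exists_mem_addableFamilies (hn : 2 ≤ n) (hyH : y ∈ Hyp2 n) :
    (∃ a b t, HasProfile y a b t ∧ IsAddableProfile n a b t) ↔ ∃ X ∈ addableFamilies n, y ∈ X :=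
  ⟨fun ⟨_, _, _, hy, hadd⟩ => exists_mem_addableFamilies_of_hasProfile hn hyH hy hadd,
    fun ⟨_, hX, hyX⟩ =>
      let ⟨a, b, t, hadd, hp⟩ := isAddableClass_of_mem_addableFamilies hn hX
      ⟨a, b, t, hp y hyX, hadd⟩⟩

theorem exists_mem_addableFamilies_iff : (∃ X ∈ addableFamilies n, y ∈ X) ↔
    y ∈ X1set n 1 ∪ X1set n (-1) ∪ X2set n 1 ∪ X2set n (-1) ∪ X3set n 1 ∪ X3set n (-1) ∨
      (n ≤ 10 ∧ y ∈ X4set n 1 ∪ X4set n (-1)) := by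
  by_cases h10 : n ≤ 10 <;> simp [addableFamilies, h10, or_assoc]
  tauto

end Classes

theorem addable_vectors_Jprime (n : ℕ) (hn : 5 ≤ n) :
    (∀ y ∈ Hyp2 n \ JohnsonRep' n,
      (IsSDistanceSet 2 (JohnsonRep' n ∪ {y}) ↔
        (y ∈ X1set n 1 ∪ X1set n (-1) ∪ X2set n 1 ∪ X2set n (-1) ∪
            X3set n 1 ∪ X3set n (-1) ∨
          (n ≤ 10 ∧ y ∈ X4set n 1 ∪ X4set n (-1))))) ∧
    (∀ X ∈ ({X1set n 1, X1set n (-1), X2set n 1, X2set n (-1), X3set n 1, X3set n (-1)} :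
        Set (Set (EuclideanSpace ℝ (Fin n)))) ∪
        (if n ≤ 10 then {X4set n 1, X4set n (-1)} else ∅),
      (∀ u ∈ X, ∀ v ∈ X, u ≠ v → dist u v = Real.sqrt 2 ∨ dist u v = 2) ∧
      IsSDistanceSet 2 (JohnsonRep' n ∪ X)) := by
  refine ⟨fun y ⟨hyH, hyJ⟩ => ?_, fun X hX => ?_⟩
  · rw [isSDistanceSet_two_johnsonRep'_union_singleton_iff hn hyJ,
      forall_dist_johnsonRep'_mem_iff_exists (by omega),
      exists_hasProfile_iff_exists_mem_addableFamilies (by omega) hyH,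
      exists_mem_addableFamilies_iff]
  · have hX := isAddableClass_of_mem_addableFamilies (by omega) hX
    exact ⟨fun u hu v hv huv => .inl (hX.dist_eq_sqrt_two hu hv huv),
      hX.isSDistanceSet_two_johnsonRep'_union hn⟩
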